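/- Let G = [[G₁₁, G₁₂],[G₁₂ᵀ, G₂₂]] be an invertible symmetric block matrix with G₂₂ invertible and F := G₁₁ − G₁₂G₂₂⁻¹G₁₂ᵀ invertible. Let A_α (q×n_x), B_α (q×n_y) be matrices with U_α := B_αG₂₂⁻¹B_αᵀ invertible, set W_α = A_α − B_αG₂₂⁻¹G₁₂ᵀ, assume Γ_α := F + W_αᵀU_α⁻¹W_α is invertible, let N_α = [A_α B_α]ᵀ with N_αᵀG⁻¹N_α invertible, and let H_α = G⁻¹ − G⁻¹N_α(N_αᵀG⁻¹N_α)⁻¹N_αᵀG⁻¹. Define H_α^B = G₂₂⁻¹(I − B_αᵀU_α⁻¹B_αG₂₂⁻¹). Then for any row vectors A_p ∈ ℝ^{1×n_x}, B_p ∈ ℝ^{1×n_y}, setting n_p = (A_pᵀ, B_pᵀ) and W_p = A_p − B_pG₂₂⁻¹G₁₂ᵀ: n_pᵀ H_α n_p = B_p H_α^B B_pᵀ + (W_p − B_pG₂₂⁻¹B_αᵀU_α⁻¹W_α) Γ_α⁻¹ (W_p − B_pG₂₂⁻¹B_αᵀU_α⁻¹W_α)ᵀ. -/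

import Mathlib

/-!
Write `G⁻¹ = L · diag(F⁻¹, G₂₂⁻¹) · Lᵀ` with `L` block unit lower triangular (block LDLᵀ).
The map `K ↦ K - K N (Nᵀ K N)⁻¹ Nᵀ K` commutes with such congruences once `N` is replaced by
`Lᵀ N`, and `Lᵀ` turns `n_p` and `N_α` into `(W_p, B_p)` and `(W_α, B_α)`. In this block-diagonal
picture `N_αᵀ G⁻¹ N_α = U_α + W_α F⁻¹ W_αᵀ`, which the Woodbury identity inverts through `Γ_α`;
the rest is the push-through rule `F⁻¹ (Γ_α - F) Γ_α⁻¹ = F⁻¹ - Γ_α⁻¹`.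
-/

open Matrix

namespace Matrix

variable {k l m n p q R : Type*} [CommRing R]

theorem inv_fromBlocks_eq_of_isUnit₂₂ [Fintype m] [Fintype n] [DecidableEq m] [DecidableEq n]
    (A : Matrix m m R) (B : Matrix m n R) (C : Matrix n m R)
    (D : Matrix n n R) (hD : IsUnit D.det) (hS : IsUnit (A - B * D⁻¹ * C).det) :
    (fromBlocks A B C D)⁻¹ =
      fromBlocks 1 0 (-(D⁻¹ * C)) 1 * fromBlocks (A - B * D⁻¹ * C)⁻¹ 0 0 D⁻¹ *
        fromBlocks 1 (-(B * D⁻¹)) 0 1 := by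
  set S := A - B * D⁻¹ * C
  have hA : A = S + B * D⁻¹ * C := (sub_add_cancel _ _).symm
  apply inv_eq_left_inv
  rw [hA, ← fromBlocks_one]
  simp only [fromBlocks_multiply, Matrix.mul_zero, Matrix.zero_mul, add_zero, zero_add,
    Matrix.one_mul, Matrix.mul_one, Matrix.mul_neg, Matrix.neg_mul, Matrix.mul_add,
    Matrix.add_mul, Matrix.mul_assoc, nonsing_inv_mul _ hD, nonsing_inv_mul _ hS]
  congr 1 <;> abel

/-- Both sides are `fromCols x (-y) * (fromBlocks F V W (-U))⁻¹ * fromRows x' (-y')`, with the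
inverse expanded through the Schur complement of `F`, respectively of `-U`. -/
theorem sub_mul_inv_add_mul_eq [Fintype p] [Fintype q] [DecidableEq p] [DecidableEq q]
    (F : Matrix p p R) (U : Matrix q q R) (W : Matrix q p R) (V : Matrix p q R)
    (x : Matrix k p R) (y : Matrix k q R) (x' : Matrix p k R)
    (y' : Matrix q k R) (hF : IsUnit F.det) (hU : IsUnit U.det)
    (hΓ : IsUnit (F + V * U⁻¹ * W).det) :
    x * F⁻¹ * x' - (x * F⁻¹ * V + y) * (U + W * F⁻¹ * V)⁻¹ * (W * F⁻¹ * x' + y') =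
      (x - y * U⁻¹ * W) * (F + V * U⁻¹ * W)⁻¹ * (x' - V * U⁻¹ * y') - y * U⁻¹ * y' := by
  set Γ := F + V * U⁻¹ * W with hΓdef
  have woodbury : (U + W * F⁻¹ * V)⁻¹ = U⁻¹ - U⁻¹ * W * Γ⁻¹ * V * U⁻¹ := by
    rw [add_mul_mul_inv_eq_sub U W F⁻¹ V ((isUnit_iff_isUnit_det U).mpr hU)
      ((isUnit_iff_isUnit_det _).mpr (isUnit_nonsing_inv_det F hF)), nonsing_inv_nonsing_inv F hF]
    rwa [nonsing_inv_nonsing_inv F hF, isUnit_iff_isUnit_det]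
  have hQ : V * U⁻¹ * W = Γ - F := by rw [hΓdef]; abel
  have push_left (X : Matrix p k R) :
      F⁻¹ * (V * (U⁻¹ * (W * (Γ⁻¹ * X)))) = F⁻¹ * X - Γ⁻¹ * X := by
    rw [← Matrix.mul_assoc V, ← Matrix.mul_assoc (V * U⁻¹), hQ, Matrix.sub_mul, Matrix.mul_sub,
      mul_nonsing_inv_cancel_left _ _ hΓ, nonsing_inv_mul_cancel_left _ _ hF]
  have push_right (X : Matrix p k R) :
      Γ⁻¹ * (V * (U⁻¹ * (W * (F⁻¹ * X)))) = F⁻¹ * X - Γ⁻¹ * X := by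
    rw [← Matrix.mul_assoc V, ← Matrix.mul_assoc (V * U⁻¹), hQ, Matrix.sub_mul, Matrix.mul_sub,
      mul_nonsing_inv_cancel_left _ _ hF, nonsing_inv_mul_cancel_left _ _ hΓ]
  rw [woodbury]
  simp only [Matrix.mul_add, Matrix.add_mul, Matrix.mul_sub, Matrix.sub_mul, Matrix.mul_assoc,
    push_left, push_right]
  abel

def unitLowerBlocks [DecidableEq m] [DecidableEq n] (C : Matrix n m R) :
    Matrix (m ⊕ n) (m ⊕ n) R :=
  fromBlocks 1 0 C 1

theorem inv_fromBlocks_eq_of_isSymm [Fintype m] [Fintype n] [DecidableEq m] [DecidableEq n]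
    (A : Matrix m m R) (B : Matrix m n R) (D : Matrix n n R) (hD : D.IsSymm)
    (hDinv : IsUnit D.det) (hS : IsUnit (A - B * D⁻¹ * Bᵀ).det) :
    (fromBlocks A B Bᵀ D)⁻¹ =
      unitLowerBlocks (-(D⁻¹ * Bᵀ)) * fromBlocks (A - B * D⁻¹ * Bᵀ)⁻¹ 0 0 D⁻¹ *
        (unitLowerBlocks (-(D⁻¹ * Bᵀ)))ᵀ := by
  rw [inv_fromBlocks_eq_of_isUnit₂₂ A B Bᵀ D hDinv hS, unitLowerBlocks, fromBlocks_transpose]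
  simp [transpose_mul, hD.inv.eq]

noncomputable def constrainedInv [Fintype n] [Fintype m] [DecidableEq m]
    (K : Matrix n n R) (N : Matrix n m R) : Matrix n n R :=
  K - K * N * (Nᵀ * K * N)⁻¹ * Nᵀ * K

theorem constrainedInv_mul_mul_transpose [Fintype n] [Fintype m] [Fintype p] [DecidableEq m]
    (E : Matrix n p R) (K : Matrix p p R) (N : Matrix n m R) :
    constrainedInv (E * K * Eᵀ) N = E * constrainedInv K (Eᵀ * N) * Eᵀ := by
  simp only [constrainedInv, transpose_mul, transpose_transpose, Matrix.mul_sub, Matrix.sub_mul,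
    Matrix.mul_assoc]

theorem fromCols_mul_fromBlocks_diag_mul_transpose [Fintype p] [Fintype q]
    (x : Matrix k p R) (y : Matrix k q R) (x' : Matrix l p R) (y' : Matrix l q R)
    (K : Matrix p p R) (L : Matrix q q R) :
    fromCols x y * fromBlocks K 0 0 L * (fromCols x' y')ᵀ = x * K * x'ᵀ + y * L * y'ᵀ := by
  rw [fromCols_mul_fromBlocks, transpose_fromCols, fromCols_mul_fromRows]
  simp

theorem fromCols_mul_unitLowerBlocks [Fintype p] [Fintype q] [DecidableEq p] [DecidableEq q]
    (x : Matrix k p R) (y : Matrix k q R) (C : Matrix q p R) :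
    fromCols x y * unitLowerBlocks C = fromCols (x + y * C) y := by
  rw [unitLowerBlocks, fromCols_mul_fromBlocks]
  simp

theorem fromCols_mul_constrainedInv_fromBlocks_mul_transpose [Fintype p] [Fintype q] [Fintype s]
    [DecidableEq p] [DecidableEq q] [DecidableEq s]
    (F : Matrix p p R) (S : Matrix s s R) (W : Matrix q p R) (B : Matrix q s R)
    (U : Matrix q q R) (Γ : Matrix p p R) (w : Matrix k p R) (b : Matrix k s R)
    (hS : S.IsSymm) (hF : IsUnit F.det) (hU : U = B * S⁻¹ * Bᵀ) (hUinv : IsUnit U.det)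
    (hΓ : Γ = F + Wᵀ * U⁻¹ * W) (hΓinv : IsUnit Γ.det) :
    fromCols w b * constrainedInv (fromBlocks F⁻¹ 0 0 S⁻¹) (fromCols W B)ᵀ * (fromCols w b)ᵀ =
      b * (S⁻¹ * (1 - Bᵀ * U⁻¹ * B * S⁻¹)) * bᵀ +
        (w - b * (S⁻¹ * Bᵀ * U⁻¹ * W)) * Γ⁻¹ * (w - b * (S⁻¹ * Bᵀ * U⁻¹ * W))ᵀ := by
  have hSinv : (S⁻¹)ᵀ = S⁻¹ := hS.inv
  have hUinvt : (U⁻¹)ᵀ = U⁻¹ := by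
    refine IsSymm.inv ?_
    simp [hU, IsSymm, transpose_mul, hSinv, Matrix.mul_assoc]
  set K := fromBlocks F⁻¹ 0 0 S⁻¹
  have expand : fromCols w b * constrainedInv K (fromCols W B)ᵀ * (fromCols w b)ᵀ =
      fromCols w b * K * (fromCols w b)ᵀ - fromCols w b * K * (fromCols W B)ᵀ *
        ((fromCols W B) * K * (fromCols W B)ᵀ)⁻¹ * (fromCols W B * K * (fromCols w b)ᵀ) := by
    simp only [constrainedInv, transpose_transpose, Matrix.mul_sub, Matrix.sub_mul,
      Matrix.mul_assoc]
  rw [expand]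
  calc _ = b * S⁻¹ * bᵀ + (w * F⁻¹ * wᵀ - (w * F⁻¹ * Wᵀ + b * S⁻¹ * Bᵀ) *
        (U + W * F⁻¹ * Wᵀ)⁻¹ * (W * F⁻¹ * wᵀ + B * S⁻¹ * bᵀ)) := by
        simp only [K, fromCols_mul_fromBlocks_diag_mul_transpose, hU,
          add_comm (W * F⁻¹ * Wᵀ)]
        abel
    _ = b * S⁻¹ * bᵀ + ((w - b * S⁻¹ * Bᵀ * U⁻¹ * W) * Γ⁻¹ *
        (wᵀ - Wᵀ * U⁻¹ * (B * S⁻¹ * bᵀ)) - b * S⁻¹ * Bᵀ * U⁻¹ * (B * S⁻¹ * bᵀ)) := by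
        rw [sub_mul_inv_add_mul_eq F U W Wᵀ w (b * S⁻¹ * Bᵀ) wᵀ _ hF hUinv (hΓ ▸ hΓinv), hΓ]
    _ = _ := by
        simp only [transpose_sub, transpose_mul, transpose_transpose, hSinv, hUinvt,
          Matrix.mul_sub, Matrix.sub_mul, Matrix.mul_one, Matrix.mul_assoc]
        abel

theorem mul_constrainedInv_inv_fromBlocks_mul_transpose [Fintype m] [Fintype n] [Fintype l]
    [DecidableEq m] [DecidableEq n] [DecidableEq l]
    (A : Matrix m m R) (B : Matrix m n R) (D : Matrix n n R) (hD : D.IsSymm)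
    (hDinv : IsUnit D.det) (hS : IsUnit (A - B * D⁻¹ * Bᵀ).det)
    (P : Matrix k (m ⊕ n) R) (N : Matrix (m ⊕ n) l R) :
    P * constrainedInv (fromBlocks A B Bᵀ D)⁻¹ N * Pᵀ =
      (P * unitLowerBlocks (-(D⁻¹ * Bᵀ))) *
        constrainedInv (fromBlocks (A - B * D⁻¹ * Bᵀ)⁻¹ 0 0 D⁻¹)
          ((unitLowerBlocks (-(D⁻¹ * Bᵀ)))ᵀ * N) *
        (P * unitLowerBlocks (-(D⁻¹ * Bᵀ)))ᵀ := by
  rw [inv_fromBlocks_eq_of_isSymm A B D hD hDinv hS, constrainedInv_mul_mul_transpose]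
  simp only [transpose_mul, Matrix.mul_assoc]

theorem replicateRow_sub_vecMul [Fintype m] {ι : Type*} (v : n → R) (u : m → R)
    (M : Matrix m n R) :
    replicateRow ι (v - u ᵥ* M) = replicateRow ι v - replicateRow ι u * M := by
  rw [← replicateRow_vecMul]
  rfl

theorem dotProduct_mulVec_eq_replicateRow_mul [Fintype n] (u v : n → R) (M : Matrix n n R) :
    u ⬝ᵥ M *ᵥ v = (replicateRow Unit u * M * (replicateRow Unit v)ᵀ) () () := by
  rw [transpose_replicateRow, Matrix.mul_assoc, ← replicateCol_mulVec,
    replicateRow_mul_replicateCol_apply]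

end Matrix

theorem stmt_12_general {nx ny q : ℕ}
    (G11 : Matrix (Fin nx) (Fin nx) ℝ) (G12 : Matrix (Fin nx) (Fin ny) ℝ)
    (G22 : Matrix (Fin ny) (Fin ny) ℝ)
    (hG22 : G22.IsSymm) (hG22inv : IsUnit G22.det)
    (G : Matrix (Fin nx ⊕ Fin ny) (Fin nx ⊕ Fin ny) ℝ)
    (hG : G = Matrix.fromBlocks G11 G12 G12ᵀ G22)
    (F : Matrix (Fin nx) (Fin nx) ℝ) (hF : F = G11 - G12 * G22⁻¹ * G12ᵀ)
    (hFinv : IsUnit F.det)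
    (Aα : Matrix (Fin q) (Fin nx) ℝ) (Bα : Matrix (Fin q) (Fin ny) ℝ)
    (Uα : Matrix (Fin q) (Fin q) ℝ) (hUα : Uα = Bα * G22⁻¹ * Bαᵀ)
    (hUαinv : IsUnit Uα.det)
    (Wα : Matrix (Fin q) (Fin nx) ℝ) (hWα : Wα = Aα - Bα * G22⁻¹ * G12ᵀ)
    (Γα : Matrix (Fin nx) (Fin nx) ℝ) (hΓα : Γα = F + Wαᵀ * Uα⁻¹ * Wα)
    (hΓαinv : IsUnit Γα.det)
    (Nα : Matrix (Fin nx ⊕ Fin ny) (Fin q) ℝ)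
    (hNα : Nα = (Matrix.fromCols Aα Bα)ᵀ)
    (Hα : Matrix (Fin nx ⊕ Fin ny) (Fin nx ⊕ Fin ny) ℝ)
    (hHα : Hα = G⁻¹ - G⁻¹ * Nα * (Nαᵀ * G⁻¹ * Nα)⁻¹ * Nαᵀ * G⁻¹)
    (HB : Matrix (Fin ny) (Fin ny) ℝ)
    (hHB : HB = G22⁻¹ * (1 - Bαᵀ * Uα⁻¹ * Bα * G22⁻¹))
    (Ap : Fin nx → ℝ) (Bp : Fin ny → ℝ)
    (np : Fin nx ⊕ Fin ny → ℝ) (hnp : np = Sum.elim Ap Bp)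
    (Wp : Fin nx → ℝ) (hWp : Wp = Ap - Bp ᵥ* (G22⁻¹ * G12ᵀ))
    (w : Fin nx → ℝ) (hw : w = Wp - Bp ᵥ* (G22⁻¹ * Bαᵀ * Uα⁻¹ * Wα)) :
    np ⬝ᵥ Hα *ᵥ np = Bp ⬝ᵥ HB *ᵥ Bp + w ⬝ᵥ Γα⁻¹ *ᵥ w := by
  have hP : replicateRow Unit np * unitLowerBlocks (-(G22⁻¹ * G12ᵀ)) =
      fromCols (replicateRow Unit Wp) (replicateRow Unit Bp) := by
    rw [hnp, hWp, replicateRow_sub_vecMul, show replicateRow Unit (Sum.elim Ap Bp) =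
      fromCols (replicateRow Unit Ap) (replicateRow Unit Bp) from rfl,
      fromCols_mul_unitLowerBlocks, Matrix.mul_neg, ← sub_eq_add_neg]
  have hN : (unitLowerBlocks (-(G22⁻¹ * G12ᵀ)))ᵀ * Nα = (fromCols Wα Bα)ᵀ := by
    rw [hNα, ← transpose_mul, fromCols_mul_unitLowerBlocks, hWα, Matrix.mul_neg, ← sub_eq_add_neg,
      Matrix.mul_assoc]
  have key : replicateRow Unit np * Hα * (replicateRow Unit np)ᵀ =
      replicateRow Unit Bp * HB * (replicateRow Unit Bp)ᵀ +
        replicateRow Unit w * Γα⁻¹ * (replicateRow Unit w)ᵀ := by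
    rw [show Hα = constrainedInv G⁻¹ Nα from hHα, hG,
      mul_constrainedInv_inv_fromBlocks_mul_transpose G11 G12 G22 hG22 hG22inv (hF ▸ hFinv),
      ← hF, hP, hN, fromCols_mul_constrainedInv_fromBlocks_mul_transpose F G22 Wα Bα Uα Γα _ _
        hG22 hFinv hUα hUαinv hΓα hΓαinv, hw, replicateRow_sub_vecMul, hHB]
  rw [dotProduct_mulVec_eq_replicateRow_mul, key, Matrix.add_apply,
    ← dotProduct_mulVec_eq_replicateRow_mul, ← dotProduct_mulVec_eq_replicateRow_mul]

/-- Decomposition of the quadratic form `n_pᵀ H_α n_p` in terms of the reduced matrix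
`H_α^B` and the Schur-type matrix `Γ_α`:
`n_pᵀ H_α n_p = B_p H_α^B B_pᵀ + (W_p − B_pG₂₂⁻¹B_αᵀU_α⁻¹W_α) Γ_α⁻¹ (…)ᵀ`. -/
theorem stmt_12 {nx ny q : ℕ}
    (G11 : Matrix (Fin nx) (Fin nx) ℝ) (G12 : Matrix (Fin nx) (Fin ny) ℝ)
    (G22 : Matrix (Fin ny) (Fin ny) ℝ)
    (hG11 : G11.IsSymm) (hG22 : G22.IsSymm) (hG22inv : IsUnit G22.det)
    (G : Matrix (Fin nx ⊕ Fin ny) (Fin nx ⊕ Fin ny) ℝ)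
    (hG : G = Matrix.fromBlocks G11 G12 G12ᵀ G22)
    (hGinv : IsUnit G.det)
    (F : Matrix (Fin nx) (Fin nx) ℝ) (hF : F = G11 - G12 * G22⁻¹ * G12ᵀ)
    (hFinv : IsUnit F.det)
    (Aα : Matrix (Fin q) (Fin nx) ℝ) (Bα : Matrix (Fin q) (Fin ny) ℝ)
    (Uα : Matrix (Fin q) (Fin q) ℝ) (hUα : Uα = Bα * G22⁻¹ * Bαᵀ)
    (hUαinv : IsUnit Uα.det)
    (Wα : Matrix (Fin q) (Fin nx) ℝ) (hWα : Wα = Aα - Bα * G22⁻¹ * G12ᵀ)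
    (Γα : Matrix (Fin nx) (Fin nx) ℝ) (hΓα : Γα = F + Wαᵀ * Uα⁻¹ * Wα)
    (hΓαinv : IsUnit Γα.det)
    (Nα : Matrix (Fin nx ⊕ Fin ny) (Fin q) ℝ)
    (hNα : Nα = (Matrix.fromCols Aα Bα)ᵀ)
    (hNGN : IsUnit (Nαᵀ * G⁻¹ * Nα).det)
    (Hα : Matrix (Fin nx ⊕ Fin ny) (Fin nx ⊕ Fin ny) ℝ)
    (hHα : Hα = G⁻¹ - G⁻¹ * Nα * (Nαᵀ * G⁻¹ * Nα)⁻¹ * Nαᵀ * G⁻¹)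
    (HB : Matrix (Fin ny) (Fin ny) ℝ)
    (hHB : HB = G22⁻¹ * (1 - Bαᵀ * Uα⁻¹ * Bα * G22⁻¹))
    (Ap : Fin nx → ℝ) (Bp : Fin ny → ℝ)
    (np : Fin nx ⊕ Fin ny → ℝ) (hnp : np = Sum.elim Ap Bp)
    (Wp : Fin nx → ℝ) (hWp : Wp = Ap - Bp ᵥ* (G22⁻¹ * G12ᵀ))
    (w : Fin nx → ℝ) (hw : w = Wp - Bp ᵥ* (G22⁻¹ * Bαᵀ * Uα⁻¹ * Wα)) :
    np ⬝ᵥ Hα *ᵥ np = Bp ⬝ᵥ HB *ᵥ Bp + w ⬝ᵥ Γα⁻¹ *ᵥ w :=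
  stmt_12_general G11 G12 G22 hG22 hG22inv G hG F hF hFinv Aα Bα Uα hUα hUαinv Wα hWα Γα hΓα hΓαinv
    Nα hNα Hα hHα HB hHB Ap Bp np hnp Wp hWp w hw
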